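/- If f : ℝ^p → ℝ is L-smooth (gradient is L-Lipschitz) and satisfies the PL condition with parameter μ, then gradient descent with constant step size η = 1/L satisfies f(θ_T) - f* ≤ (1 - μ/L)^T (f(θ_0) - f*). -/

import Mathlib

open scoped RealInnerProductSpace

lemma descent_lemma {E : Type*} [NormedAddCommGroup E] [InnerProductSpace ℝ E] [CompleteSpace E]
    (f : E → ℝ) (L : ℝ) (hL : 0 < L) (hdiff : Differentiable ℝ f)
    (hsmooth : ∀ x y, ‖gradient f x - gradient f y‖ ≤ L * ‖x - y‖) (x v : E) :
    f (x + v) ≤ f x + ⟪gradient f x, v⟫ + L / 2 * ‖v‖ ^ 2 := by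
  set h : ℝ → ℝ := fun t => f (x + t • v) - t * ⟪gradient f x, v⟫ - L / 2 * t ^ 2 * ‖v‖ ^ 2
    with hh
  have hderiv : ∀ t : ℝ, HasDerivAt h
      (⟪gradient f (x + t • v), v⟫ - ⟪gradient f x, v⟫ - L / 2 * (2 * t) * ‖v‖ ^ 2) t := by
    intro t
    have hc : HasDerivAt (fun t : ℝ => x + t • v) v t := by
      simpa using ((hasDerivAt_id t).smul_const v).const_add x
    have hf : HasFDerivAt f (InnerProductSpace.toDual ℝ E (gradient f (x + t • v)))
        (x + t • v) :=
      ((hdiff (x + t • v)).hasGradientAt).hasFDerivAt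
    have h1 : HasDerivAt (fun t : ℝ => f (x + t • v)) ⟪gradient f (x + t • v), v⟫ t := by
      exact hf.comp_hasDerivAt t hc
    have h2 : HasDerivAt (fun t : ℝ => t * ⟪gradient f x, v⟫) ⟪gradient f x, v⟫ t := by
      simpa using (hasDerivAt_id t).mul_const ⟪gradient f x, v⟫
    have h3 : HasDerivAt (fun t : ℝ => L / 2 * t ^ 2 * ‖v‖ ^ 2)
        (L / 2 * (2 * t) * ‖v‖ ^ 2) t := by
      have := ((hasDerivAt_pow 2 t).const_mul (L / 2)).mul_const (‖v‖ ^ 2)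
      simpa [mul_comm, mul_assoc, mul_left_comm] using this
    exact (h1.sub h2).sub h3
  have hanti : AntitoneOn h (Set.Icc (0 : ℝ) 1) := by
    apply antitoneOn_of_deriv_nonpos (convex_Icc 0 1)
    · exact (Differentiable.continuous (fun t => (hderiv t).differentiableAt)).continuousOn
    · intro t ht
      exact (hderiv t).differentiableAt.differentiableWithinAt
    · intro t ht
      rw [(hderiv t).deriv]
      have ht0 : 0 < t := by
        have := interior_Icc (a := (0:ℝ)) (b := 1) ▸ ht
        exact (Set.mem_Ioo.mp this).1
      have htb : t ∈ Set.Ioo (0:ℝ) 1 := by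
        have := interior_Icc (a := (0:ℝ)) (b := 1) ▸ ht
        exact this
      have hcs : ⟪gradient f (x + t • v) - gradient f x, v⟫ ≤
          ‖gradient f (x + t • v) - gradient f x‖ * ‖v‖ :=
        real_inner_le_norm _ _
      have hlip : ‖gradient f (x + t • v) - gradient f x‖ ≤ L * (t * ‖v‖) := by
        have := hsmooth (x + t • v) x
        simpa [norm_smul, abs_of_pos ht0] using this
      have hinner : ⟪gradient f (x + t • v), v⟫ - ⟪gradient f x, v⟫ ≤ L * t * ‖v‖ ^ 2 := by
        rw [← inner_sub_left]
        calc ⟪gradient f (x + t • v) - gradient f x, v⟫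
            ≤ ‖gradient f (x + t • v) - gradient f x‖ * ‖v‖ := hcs
          _ ≤ L * (t * ‖v‖) * ‖v‖ := by
              exact mul_le_mul_of_nonneg_right hlip (norm_nonneg v)
          _ = L * t * ‖v‖ ^ 2 := by ring
      nlinarith [hinner]
  have := hanti (Set.left_mem_Icc.mpr zero_le_one) (Set.right_mem_Icc.mpr zero_le_one)
    zero_le_one
  simp only [hh] at this
  have h0 : f (x + (1:ℝ) • v) - 1 * ⟪gradient f x, v⟫ - L / 2 * 1 ^ 2 * ‖v‖ ^ 2 ≤
      f (x + (0:ℝ) • v) - 0 * ⟪gradient f x, v⟫ - L / 2 * 0 ^ 2 * ‖v‖ ^ 2 := this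
  simp only [one_smul, zero_smul, add_zero, one_mul, zero_mul, one_pow] at h0
  nlinarith [h0]

/-- Gradient descent with step size `1/L` on an `L`-smooth function satisfying
the PL condition with parameter `μ` converges linearly. -/
theorem gradient_descent_PL_linear_convergence {p : ℕ}
    (f : EuclideanSpace ℝ (Fin p) → ℝ) (L μ : ℝ) (hμ : 0 < μ) (hμL : μ ≤ L)
    (hdiff : Differentiable ℝ f)
    (hsmooth : ∀ x y, ‖gradient f x - gradient f y‖ ≤ L * ‖x - y‖)
    (θm : EuclideanSpace ℝ (Fin p)) (hmin : ∀ θ, f θm ≤ f θ)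
    (hPL : ∀ θ, ‖gradient f θ‖ ^ 2 ≥ 2 * μ * (f θ - f θm))
    (θ : ℕ → EuclideanSpace ℝ (Fin p))
    (hupd : ∀ t : ℕ, θ (t + 1) = θ t - (1 / L) • gradient f (θ t)) :
    ∀ T : ℕ, f (θ T) - f θm ≤ (1 - μ / L) ^ T * (f (θ 0) - f θm) := by
  have hL : 0 < L := lt_of_lt_of_le hμ hμL
  have hstep : ∀ t : ℕ, f (θ (t + 1)) - f θm ≤ (1 - μ / L) * (f (θ t) - f θm) := by
    intro t
    set g := gradient f (θ t) with hg
    have hdesc := descent_lemma f L hL hdiff hsmooth (θ t) (-(1 / L) • g)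
    have hupdt : θ (t + 1) = θ t + -(1 / L) • g := by
      rw [hupd t]; module
    rw [← hupdt] at hdesc
    have hinner : ⟪g, -(1 / L) • g⟫ = -(1 / L) * ‖g‖ ^ 2 := by
      rw [real_inner_smul_right, real_inner_self_eq_norm_sq]
    have hnorm : ‖-(1 / L) • g‖ ^ 2 = (1 / L) ^ 2 * ‖g‖ ^ 2 := by
      rw [norm_smul]
      rw [mul_pow, Real.norm_eq_abs, sq_abs]; ring
    rw [hinner, hnorm] at hdesc
    have hpl := hPL (θ t)
    have hge : f θm ≤ f (θ t) := hmin (θ t)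
    have key : f (θ (t + 1)) ≤ f (θ t) - 1 / (2 * L) * ‖g‖ ^ 2 := by
      have : -(1 / L) * ‖g‖ ^ 2 + L / 2 * ((1 / L) ^ 2 * ‖g‖ ^ 2) =
          -(1 / (2 * L)) * ‖g‖ ^ 2 := by field_simp; ring
      nlinarith [hdesc]
    have h2 : 1 / (2 * L) * ‖g‖ ^ 2 ≥ 1 / (2 * L) * (2 * μ * (f (θ t) - f θm)) := by
      apply mul_le_mul_of_nonneg_left hpl (by positivity)
    have h3 : 1 / (2 * L) * (2 * μ * (f (θ t) - f θm)) = μ / L * (f (θ t) - f θm) := by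
      field_simp
    rw [h3] at h2
    nlinarith [key, h2]
  intro T
  induction T with
  | zero => simp
  | succ n ih =>
    have hfac : (0:ℝ) ≤ 1 - μ / L := by
      have : μ / L ≤ 1 := (div_le_one hL).mpr hμL
      linarith
    calc f (θ (n + 1)) - f θm ≤ (1 - μ / L) * (f (θ n) - f θm) := hstep n
      _ ≤ (1 - μ / L) * ((1 - μ / L) ^ n * (f (θ 0) - f θm)) :=
          mul_le_mul_of_nonneg_left ih hfac
      _ = (1 - μ / L) ^ (n + 1) * (f (θ 0) - f θm) := by ring
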